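/- arXiv:1911.02297 — 5 statements merged into one kernel-verified Lean document; each statement's English description precedes it below -/
import Mathlib

section
/- Let V be a nonempty finite set, w : V → V → ℝ a symmetric function with nonnegative values and total sum Σ_{u,v∈V} w(u,v) = 1, and set d(v) = Σ_{u∈V} w(v,u). Let λ be a real number such that for every f : V → ℝ, Σ_{u,v∈V} w(u,v)·f(u)·f(v) ≥ λ·Σ_{v∈V} d(v)·f(v)². Then for every subset S ⊆ V, writing α = Σ_{v∈S} d(v), one has Σ_{u∈S} Σ_{v∈S} w(u,v) ≥ (1-λ)·α² + λ·α. -/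
/-- **The key spectral inequality in the proof of the Hoffman bound.**
`w` is a symmetric nonnegative edge-weight function with total sum 1 and vertex measure
`d v = ∑ u, w v u`. If `λ` is a lower bound for the spectrum of the normalized adjacency
operator, then for every `S ⊆ V`, with `α = ∑_{v ∈ S} d v`, the probability
`∑_{u,v ∈ S} w u v` that a random edge has both endpoints in `S` is at least
`(1-λ)·α² + λ·α`. -/
theorem hoffman_spectral_inequality
    {V : Type*} [Fintype V] [Nonempty V]
    (w : V → V → ℝ)
    (hsymm : ∀ u v : V, w u v = w v u)
    (hnonneg : ∀ u v : V, 0 ≤ w u v)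
    (hsum : ∑ u : V, ∑ v : V, w u v = 1)
    (lam : ℝ)
    (hspec : ∀ f : V → ℝ,
      ∑ u : V, ∑ v : V, w u v * f u * f v ≥
        lam * ∑ v : V, (∑ u : V, w v u) * f v ^ 2)
    (S : Finset V) :
    ∑ u ∈ S, ∑ v ∈ S, w u v ≥
      (1 - lam) * (∑ v ∈ S, (∑ u : V, w v u)) ^ 2 +
        lam * (∑ v ∈ S, (∑ u : V, w v u)) := by
  classical
  set g : V → ℝ := fun v => if v ∈ S then 1 else 0 with hg
  set α : ℝ := ∑ v ∈ S, (∑ u : V, w v u) with hα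
  have hgsq : ∀ v, g v ^ 2 = g v := by
    intro v; simp only [hg]; split <;> norm_num
  -- basic sums
  have hA : ∑ u : V, ∑ v : V, w u v * g u * g v = ∑ u ∈ S, ∑ v ∈ S, w u v := by
    simp only [hg]
    rw [← Finset.sum_subset (Finset.subset_univ S)]
    · refine Finset.sum_congr rfl fun u hu => ?_
      rw [← Finset.sum_subset (Finset.subset_univ S)]
      · exact Finset.sum_congr rfl fun v hv => by simp [hu, hv]
      · intro v _ hv; simp [hv]
    · intro u _ hu; simp [hu]
  have hB : ∑ u : V, ∑ v : V, w u v * g u = α := by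
    simp only [hg, hα]
    rw [← Finset.sum_subset (Finset.subset_univ S)]
    · exact Finset.sum_congr rfl fun u hu => by simp [hu]
    · intro u _ hu; simp [hu]
  have hB' : ∑ u : V, ∑ v : V, w u v * g v = α := by
    rw [Finset.sum_comm]
    calc ∑ v : V, ∑ u : V, w u v * g v
        = ∑ v : V, ∑ u : V, w v u * g v := by
          refine Finset.sum_congr rfl fun v _ => Finset.sum_congr rfl fun u _ => by
            rw [hsymm]
      _ = α := hB
  have hdg : ∑ v : V, (∑ u : V, w v u) * g v = α := by
    simp only [hg, hα]
    rw [← Finset.sum_subset (Finset.subset_univ S)]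
    · exact Finset.sum_congr rfl fun v hv => by simp [hv]
    · intro v _ hv; simp [hv]
  have h := hspec (fun v => g v - α)
  have hL : ∑ u : V, ∑ v : V, w u v * ((fun v => g v - α) u) * ((fun v => g v - α) v)
      = (∑ u ∈ S, ∑ v ∈ S, w u v) - α ^ 2 := by
    have expand : ∀ u v : V, w u v * (g u - α) * (g v - α)
        = w u v * g u * g v - α * (w u v * g u) - α * (w u v * g v) + α ^ 2 * w u v := by
      intros; ring
    simp only []
    calc ∑ u : V, ∑ v : V, w u v * (g u - α) * (g v - α)
        = ∑ u : V, ∑ v : V, (w u v * g u * g v - α * (w u v * g u)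
            - α * (w u v * g v) + α ^ 2 * w u v) := by
          exact Finset.sum_congr rfl fun u _ => Finset.sum_congr rfl fun v _ => expand u v
      _ = (∑ u : V, ∑ v : V, w u v * g u * g v)
            - α * (∑ u : V, ∑ v : V, w u v * g u)
            - α * (∑ u : V, ∑ v : V, w u v * g v)
            + α ^ 2 * (∑ u : V, ∑ v : V, w u v) := by
          simp only [Finset.sum_add_distrib, Finset.sum_sub_distrib, Finset.mul_sum]
      _ = (∑ u ∈ S, ∑ v ∈ S, w u v) - α ^ 2 := by
          rw [hA, hB, hB', hsum]; ring
  have hR : ∑ v : V, (∑ u : V, w v u) * ((fun v => g v - α) v) ^ 2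
      = α - 2 * α ^ 2 + α ^ 2 := by
    have expand : ∀ v : V, (∑ u : V, w v u) * (g v - α) ^ 2
        = (∑ u : V, w v u) * g v ^ 2 - 2 * α * ((∑ u : V, w v u) * g v)
          + α ^ 2 * (∑ u : V, w v u) := by
      intros; ring
    calc ∑ v : V, (∑ u : V, w v u) * (g v - α) ^ 2
        = ∑ v : V, ((∑ u : V, w v u) * g v ^ 2 - 2 * α * ((∑ u : V, w v u) * g v)
          + α ^ 2 * (∑ u : V, w v u)) :=
          Finset.sum_congr rfl fun v _ => expand v
      _ = (∑ v : V, (∑ u : V, w v u) * g v)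
            - 2 * α * (∑ v : V, (∑ u : V, w v u) * g v)
            + α ^ 2 * (∑ v : V, ∑ u : V, w v u) := by
          simp only [Finset.sum_add_distrib, Finset.sum_sub_distrib, Finset.mul_sum, hgsq]
      _ = α - 2 * α ^ 2 + α ^ 2 := by rw [hdg, hsum]; ring
  rw [hL, hR] at h
  nlinarith [h]
end

section
/- Let k ≥ 2, let V be a nonempty finite set, and let μ : (Fin k → V) → ℝ be a weighted k-uniform hypergraph on V with marginals m_i. Let λ_0, …, λ_{k-2} be real numbers with λ_i ≤ 0 for each i, such that for every 0 ≤ i ≤ k-2, every i-face σ : Fin i → V, and every f : V → ℝ: Σ_{u,v∈V} m_{i+2}(σ ⌢ (u,v))·f(u)·f(v) ≥ λ_i · Σ_{v∈V} (Σ_{u∈V} m_{i+2}(σ ⌢ (v,u)))·f(v)². Set B = 1 - 1/((1-λ_0)⋯(1-λ_{k-2})), and suppose there exists an independent set I₀ ⊆ V with Σ_{v∈I₀} m_1(v) = B. Then for every n ≥ 1, in the n-th tensor power μ_n on (Fin n → V): (a) every independent set J ⊆ (Fin n → V) satisfies Σ_{x∈J} Π_j m_1(x(j)) ≤ B, and (b)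 there exists an independent set J with Σ_{x∈J} Π_j m_1(x(j)) = B. In particular the independence number of the n-th tensor power equals B. -/
/-- The `i`-th marginal of a weight function `μ` on `k`-tuples: `marg μ i h σ` is the sum of
`μ` over all extensions of the `i`-tuple `σ` to a `k`-tuple (`σ` occupying the first `i`
coordinates). -/
noncomputable def marg {V : Type*} [Fintype V] {k : ℕ} (μ : (Fin k → V) → ℝ)
    (i : ℕ) (hik : i ≤ k) (σ : Fin i → V) : ℝ :=
  ∑ τ : Fin (k - i) → V,
    μ (fun j => if h : (j : ℕ) < i then σ ⟨j, h⟩ else τ ⟨(j : ℕ) - i, by omega⟩)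

/-- The `n`-th tensor power of a weighted `k`-uniform hypergraph `μ` on `V`: the weight of a
`k`-tuple of vertices of `V^n` is the product over the coordinates `j ∈ Fin n` of the weight
of the `j`-th column. -/
noncomputable def tensorPow {V : Type*} [Fintype V] {k : ℕ} (μ : (Fin k → V) → ℝ)
    (n : ℕ) (τ : Fin k → (Fin n → V)) : ℝ :=
  ∏ j : Fin n, μ (fun i => τ i j)

/-!
The Hoffman bound is proved by induction down the links. For an `i`-face `σ` inside an
independent set `I`, testing the spectral inequality of the link of `σ` against `1_I - c`, where
`c` is the relative weight of `I` in the link, and bounding the weight of `I × I` in the link by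
the inductive bound for the `(i+1)`-faces gives
`∑_{v ∈ I} m_{i+1}(σ v) ≤ (1 - 1 / ∏_{i ≤ t ≤ k-2} (1 - λ_t)) m_i(σ)`.

In the tensor power the marginals factor over the coordinates, so the link of a face is the
Kronecker product of the links of its columns. Writing the spectral hypothesis for a kernel `K`
with degree matrix `D` as `K - λ D ⪰ 0` (and using `D - K ⪰ 0`, automatic for nonnegative
kernels), it survives Kronecker products by the identity
`(1 - λ) (K ⊗ L - λ D ⊗ E) = (K - λ D) ⊗ (L - λ E) - λ (D - K) ⊗ (E - L)`.
So the tensor power satisfies the hypotheses of the Hoffman bound with the same `λ_i`, which gives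
the upper bound, while the cylinder `{x | x 0 ∈ I₀}` is an independent set with the same measure
as `I₀`.
-/

open Finset
open scoped Kronecker

namespace Matrix

variable {α β : Type*}

def piKronecker {n : ℕ} (w : Fin n → Matrix α α ℝ) : Matrix (Fin n → α) (Fin n → α) ℝ :=
  of fun x y => ∏ j, w j (x j) (y j)

@[simp]
lemma piKronecker_apply {n : ℕ} (w : Fin n → Matrix α α ℝ) (x y : Fin n → α) :
    piKronecker w x y = ∏ j, w j (x j) (y j) := rfl

lemma piKronecker_succ {n : ℕ} (w : Fin (n + 1) → Matrix α α ℝ) :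
    piKronecker w = (w 0 ⊗ₖ piKronecker (Fin.tail w)).submatrix
      (Fin.consEquiv fun _ => α).symm (Fin.consEquiv fun _ => α).symm := by
  ext x y
  simp [Fin.prod_univ_succ, Fin.consEquiv, Fin.tail]

lemma isSymm_piKronecker {n : ℕ} {w : Fin n → Matrix α α ℝ}
    (hw : ∀ j, (w j).IsSymm) : (piKronecker w).IsSymm :=
  IsSymm.ext fun x y => by simp only [piKronecker_apply, (hw _).apply]

variable [Fintype α] [Fintype β]

lemma dotProduct_mulVec_eq_sum (K : Matrix α α ℝ) (f : α → ℝ) :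
    f ⬝ᵥ (K *ᵥ f) = ∑ a, ∑ b, K a b * f a * f b := by
  simp only [dotProduct, mulVec, mul_sum]
  exact sum_congr rfl fun a _ => sum_congr rfl fun b _ => by ring

variable [DecidableEq α] [DecidableEq β]

def degreeMatrix (K : Matrix α α ℝ) : Matrix α α ℝ := diagonal fun a => ∑ b, K a b

lemma degreeMatrix_kronecker (K : Matrix α α ℝ) (L : Matrix β β ℝ) :
    degreeMatrix (K ⊗ₖ L) = degreeMatrix K ⊗ₖ degreeMatrix L := by
  simp only [degreeMatrix, diagonal_kronecker_diagonal, Fintype.sum_prod_type,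
    kroneckerMap_apply, sum_mul_sum]

lemma degreeMatrix_submatrix_equiv (K : Matrix α α ℝ) (e : β ≃ α) :
    degreeMatrix (K.submatrix e e) = (degreeMatrix K).submatrix e e := by
  ext a b
  simp only [degreeMatrix, submatrix_apply, diagonal_apply, e.apply_eq_iff_eq]
  rw [e.sum_comp (K (e a))]

lemma dotProduct_degreeMatrix_mulVec (K : Matrix α α ℝ) (f : α → ℝ) :
    f ⬝ᵥ (degreeMatrix K *ᵥ f) = ∑ a, (∑ b, K a b) * f a ^ 2 := by
  simp only [degreeMatrix, mulVec_diagonal, dotProduct]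
  exact sum_congr rfl fun a _ => by ring

lemma posSemidef_sub_smul_degreeMatrix_iff {K : Matrix α α ℝ} (hK : K.IsSymm) (lam : ℝ) :
    (K - lam • degreeMatrix K).PosSemidef ↔
      ∀ f : α → ℝ, lam * ∑ a, (∑ b, K a b) * f a ^ 2 ≤ ∑ a, ∑ b, K a b * f a * f b := by
  have hHerm : (K - lam • degreeMatrix K).IsHermitian :=
    IsHermitian.sub hK ((isHermitian_diagonal _).smul (.all lam))
  rw [posSemidef_iff_dotProduct_mulVec, and_iff_right hHerm]
  refine forall_congr' fun f => ?_
  rw [star_trivial, sub_mulVec, dotProduct_sub, smul_mulVec, dotProduct_smul, smul_eq_mul,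
    dotProduct_mulVec_eq_sum, dotProduct_degreeMatrix_mulVec, sub_nonneg]

lemma posSemidef_degreeMatrix_sub {K : Matrix α α ℝ} (hK : K.IsSymm) (hnn : ∀ a b, 0 ≤ K a b) :
    (degreeMatrix K - K).PosSemidef := by
  refine posSemidef_iff_dotProduct_mulVec.2 ⟨(isHermitian_diagonal _).sub hK, fun f => ?_⟩
  rw [star_trivial, sub_mulVec, dotProduct_sub, dotProduct_degreeMatrix_mulVec,
    dotProduct_mulVec_eq_sum, sub_nonneg]
  have hrow : ∀ g : α → ℝ, ∑ a, ∑ b, K a b * g a = ∑ a, (∑ b, K a b) * g a :=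
    fun g => sum_congr rfl fun a _ => (sum_mul ..).symm
  have hcol : ∑ a, ∑ b, K a b * f b ^ 2 = ∑ a, (∑ b, K a b) * f a ^ 2 := by
    rw [sum_comm, ← hrow]
    exact sum_congr rfl fun b _ => sum_congr rfl fun a _ => by rw [hK.apply]
  have key : ∑ a, ∑ b, K a b * (f a - f b) ^ 2 = ∑ a, ∑ b, K a b * f a ^ 2 +
      ∑ a, ∑ b, K a b * f b ^ 2 - 2 * ∑ a, ∑ b, K a b * f a * f b := by
    simp only [mul_sum, ← sum_add_distrib, ← sum_sub_distrib]
    exact sum_congr rfl fun a _ => sum_congr rfl fun b _ => by ring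
  rw [hcol, hrow] at key
  have : 0 ≤ ∑ a, ∑ b, K a b * (f a - f b) ^ 2 :=
    sum_nonneg fun a _ => sum_nonneg fun b _ => mul_nonneg (hnn a b) (sq_nonneg _)
  linarith

lemma posSemidef_kronecker_sub_smul_degreeMatrix {K : Matrix α α ℝ} {L : Matrix β β ℝ}
    {lam : ℝ} (hlam : lam ≤ 0)
    (hK : (K - lam • degreeMatrix K).PosSemidef) (hK' : (degreeMatrix K - K).PosSemidef)
    (hL : (L - lam • degreeMatrix L).PosSemidef) (hL' : (degreeMatrix L - L).PosSemidef) :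
    (K ⊗ₖ L - lam • degreeMatrix (K ⊗ₖ L)).PosSemidef := by
  have key : (1 - lam) • (K ⊗ₖ L - lam • degreeMatrix (K ⊗ₖ L)) =
      (K - lam • degreeMatrix K) ⊗ₖ (L - lam • degreeMatrix L) +
        (-lam) • ((degreeMatrix K - K) ⊗ₖ (degreeMatrix L - L)) := by
    ext ⟨a, b⟩ ⟨c, d⟩
    simp only [degreeMatrix_kronecker, smul_apply, sub_apply, add_apply, kroneckerMap_apply,
      smul_eq_mul]
    ring
  have h1 : 0 < 1 - lam := by linarith
  have := ((hK.kronecker hL).add ((hK'.kronecker hL').smul (neg_nonneg.2 hlam))).smul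
    (inv_nonneg.2 h1.le)
  rwa [← key, smul_smul, inv_mul_cancel₀ h1.ne', one_smul] at this

lemma posSemidef_piKronecker_sub_smul_degreeMatrix {n : ℕ} {w : Fin n → Matrix α α ℝ}
    {lam : ℝ} (hlam : lam ≤ 0) (hw : ∀ j, (w j).IsSymm) (hnn : ∀ j a b, 0 ≤ w j a b)
    (h : ∀ j, (w j - lam • degreeMatrix (w j)).PosSemidef) :
    (piKronecker w - lam • degreeMatrix (piKronecker w)).PosSemidef := by
  induction n with
  | zero =>
    have : piKronecker w - lam • degreeMatrix (piKronecker w) = (1 - lam) • 1 := by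
      ext x y
      simp [degreeMatrix, Subsingleton.elim x y]
    rw [this]
    exact PosSemidef.one.smul (by linarith)
  | succ n ih =>
    have hnn' : ∀ x y, 0 ≤ piKronecker (Fin.tail w) x y := fun x y => by
      rw [piKronecker_apply]
      exact prod_nonneg fun j _ => hnn _ _ _
    rw [piKronecker_succ, degreeMatrix_submatrix_equiv]
    exact (posSemidef_submatrix_equiv _).2 <| posSemidef_kronecker_sub_smul_degreeMatrix hlam (h 0)
      (posSemidef_degreeMatrix_sub (hw 0) (hnn 0))
      (ih (fun j => hw _) (fun j => hnn _) (fun j => h _))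
      (posSemidef_degreeMatrix_sub (isSymm_piKronecker fun j => hw _) hnn')

end Matrix

lemma Fin.snoc_eq_dite {V : Type*} {m : ℕ} (σ : Fin m → V) (x : V) (j : Fin (m + 1)) :
    (Fin.snoc σ x : Fin (m + 1) → V) j = if h : (j : ℕ) < m then σ ⟨j, h⟩ else x := by
  simp [Fin.snoc, Fin.castLT]

section Marginals

variable {V : Type*} [Fintype V] {k : ℕ} (μ : (Fin k → V) → ℝ)

lemma marg_nonneg (hμ : ∀ τ, 0 ≤ μ τ) {i : ℕ} (hik : i ≤ k) (σ : Fin i → V) :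
    0 ≤ marg μ i hik σ :=
  sum_nonneg fun _ _ => hμ _

lemma marg_zero (σ : Fin 0 → V) : marg μ 0 (Nat.zero_le k) σ = ∑ τ, μ τ := rfl

lemma marg_self (σ : Fin k → V) : marg μ k le_rfl σ = μ σ := by
  simp [marg]

lemma marg_eq_sum_marg_snoc {i : ℕ} (h : i + 1 ≤ k) (σ : Fin i → V) :
    marg μ i (by omega) σ = ∑ v, marg μ (i + 1) h (Fin.snoc σ v) := by
  have hpos : 0 < k - i := by omega
  let e : V × (Fin (k - (i + 1)) → V) ≃ (Fin (k - i) → V) :=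
    { toFun := fun p t => if ht : (t : ℕ) = 0 then p.1 else p.2 ⟨t - 1, by omega⟩
      invFun := fun ρ => (ρ ⟨0, hpos⟩, fun s => ρ ⟨s + 1, by omega⟩)
      left_inv := fun p => by ext <;> simp
      right_inv := fun ρ => by
        funext t
        dsimp only
        split_ifs with ht
        · exact congrArg ρ (Fin.ext ht.symm)
        · exact congrArg ρ (Fin.ext (by simp only; omega)) }
  rw [marg, ← e.sum_comp, Fintype.sum_prod_type]
  refine sum_congr rfl fun v _ => sum_congr rfl fun τ _ => congrArg μ (funext fun j => ?_)
  simp only [e, Equiv.coe_fn_mk, Fin.snoc_eq_dite]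
  split_ifs <;> first | rfl | omega

lemma sum_sum_marg_snoc_snoc {i : ℕ} (h : i + 2 ≤ k) (σ : Fin i → V) :
    ∑ u, ∑ v, marg μ (i + 2) h (Fin.snoc (Fin.snoc σ u) v) = marg μ i (by omega) σ := by
  simp only [← marg_eq_sum_marg_snoc]

lemma sum_marg_snoc_le_marg (hμ : ∀ τ, 0 ≤ μ τ) {i : ℕ} (h : i + 1 ≤ k) (σ : Fin i → V)
    (I : Finset V) : ∑ v ∈ I, marg μ (i + 1) h (Fin.snoc σ v) ≤ marg μ i (by omega) σ := by
  rw [marg_eq_sum_marg_snoc μ h]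
  exact sum_le_sum_of_subset_of_nonneg (subset_univ I) fun _ _ _ => marg_nonneg μ hμ _ _

lemma sum_marg_one (hk : 1 ≤ k) : ∑ v, marg μ 1 hk (fun _ => v) = ∑ τ, μ τ :=
  (marg_eq_sum_marg_snoc μ hk Fin.elim0).symm

lemma marg_snoc_snoc_comm (hμ : ∀ (π : Equiv.Perm (Fin k)) (τ : Fin k → V), μ (τ ∘ π) = μ τ)
    {i : ℕ} (h : i + 2 ≤ k) (σ : Fin i → V) (u v : V) :
    marg μ (i + 2) h (Fin.snoc (Fin.snoc σ u) v) =
      marg μ (i + 2) h (Fin.snoc (Fin.snoc σ v) u) := by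
  refine sum_congr rfl fun τ _ => ?_
  rw [← hμ (Equiv.swap ⟨i, by omega⟩ ⟨i + 1, by omega⟩)]
  congr 1
  funext j
  simp only [Function.comp_apply, Equiv.swap_apply_def, Fin.snoc_eq_dite, Fin.ext_iff]
  split_ifs <;> first | rfl | omega | (exfalso; simp only at *; omega)

lemma marg_tensorPow (n : ℕ) {i : ℕ} (hik : i ≤ k) (σ : Fin i → Fin n → V) :
    marg (tensorPow μ n) i hik σ = ∏ j, marg μ i hik (fun t => σ t j) := by
  simp only [marg, tensorPow, Fintype.prod_sum]
  refine Fintype.sum_equiv ⟨Function.swap, Function.swap, fun _ => rfl, fun _ => rfl⟩ _ _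
    fun τ => prod_congr rfl fun j _ => congrArg μ (funext fun t => ?_)
  split_ifs <;> rfl

lemma sum_tensorPow (n : ℕ) : ∑ τ, tensorPow μ n τ = (∑ τ, μ τ) ^ n := by
  rw [← marg_zero (tensorPow μ n) (Fin.elim0 : Fin 0 → Fin n → V), marg_tensorPow]
  simp only [marg_zero, prod_const, card_univ, Fintype.card_fin]

lemma tensorPow_comp_perm (n : ℕ)
    (hμ : ∀ (π : Equiv.Perm (Fin k)) (τ : Fin k → V), μ (τ ∘ π) = μ τ)
    (π : Equiv.Perm (Fin k)) (τ : Fin k → Fin n → V) :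
    tensorPow μ n (τ ∘ π) = tensorPow μ n τ :=
  prod_congr rfl fun j _ => hμ π fun t => τ t j

end Marginals

lemma hoffman_weighted_graph {α : Type*} [Fintype α] {w : α → α → ℝ} (hw : ∀ a b, w a b = w b a)
    {lam : ℝ} (hspec : ∀ f : α → ℝ,
      ∑ a, ∑ b, w a b * f a * f b ≥ lam * ∑ a, (∑ b, w a b) * f a ^ 2)
    (I : Finset α) (hS : 0 < ∑ a, ∑ b, w a b) :
    (1 - lam) * (∑ a ∈ I, ∑ b, w a b) ^ 2 + lam * (∑ a ∈ I, ∑ b, w a b) * ∑ a, ∑ b, w a b ≤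
      (∑ a ∈ I, ∑ b ∈ I, w a b) * ∑ a, ∑ b, w a b := by
  classical
  set S := ∑ a, ∑ b, w a b
  set vol := ∑ a ∈ I, ∑ b, w a b
  set c := vol / S
  let g : α → ℝ := fun a => if a ∈ I then 1 else 0
  have hrow : ∑ a, ∑ b, w a b * g a = vol := by
    simp [g, sum_ite_mem, vol]
  have hcol : ∑ a, ∑ b, w a b * g b = vol := by
    rw [sum_comm, ← hrow]
    exact sum_congr rfl fun a _ => sum_congr rfl fun b _ => by rw [hw]
  have hboth : ∑ a, ∑ b, w a b * g a * g b = ∑ a ∈ I, ∑ b ∈ I, w a b := by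
    simp [g, sum_ite_mem, mul_ite]
  have hQ : ∑ a, ∑ b, w a b * (g a - c) * (g b - c) =
      ∑ a ∈ I, ∑ b ∈ I, w a b - 2 * c * vol + c ^ 2 * S := by
    calc ∑ a, ∑ b, w a b * (g a - c) * (g b - c)
        = ∑ a, ∑ b, w a b * g a * g b - c * ∑ a, ∑ b, w a b * g a -
            c * ∑ a, ∑ b, w a b * g b + c ^ 2 * S := by
          simp only [S, mul_sum, ← sum_add_distrib, ← sum_sub_distrib]
          exact sum_congr rfl fun a _ => sum_congr rfl fun b _ => by ring
      _ = _ := by rw [hboth, hrow, hcol]; ring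
  have hD : ∑ a, (∑ b, w a b) * (g a - c) ^ 2 = vol - 2 * c * vol + c ^ 2 * S := by
    have hg : ∀ a, (g a - c) ^ 2 = g a - 2 * c * g a + c ^ 2 := fun a => by
      have : g a * g a = g a := by by_cases ha : a ∈ I <;> simp [g, ha]
      linear_combination this
    simp only [hg, S, ← hrow, mul_sum, sum_mul, ← sum_add_distrib, ← sum_sub_distrib]
    exact sum_congr rfl fun a _ => sum_congr rfl fun b _ => by ring
  have key := hspec fun a => g a - c
  rw [hQ, hD] at key
  have hcS : c * S = vol := div_mul_cancel₀ _ hS.ne'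
  have := mul_le_mul_of_nonneg_right (ge_iff_le.1 key) hS.le
  rw [← hcS] at this ⊢
  nlinarith

lemma hoffman_bound_step {lam P a S : ℝ} (hlam : lam ≤ 0) (hP : 1 ≤ P) (ha : 0 ≤ a) (hS : 0 ≤ S)
    (h : (1 - lam) * a ^ 2 + lam * a * S ≤ (1 - 1 / P) * a * S) :
    a ≤ (1 - 1 / ((1 - lam) * P)) * S := by
  have hP0 : 0 < P := by linarith
  have hlP : 1 ≤ (1 - lam) * P := by nlinarith
  rcases ha.eq_or_lt with rfl | ha
  · have : 0 ≤ 1 - 1 / ((1 - lam) * P) := by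
      rw [sub_nonneg, div_le_one (by linarith)]; exact hlP
    positivity
  · have h1 : (1 - lam) * a + lam * S ≤ (1 - 1 / P) * S :=
      le_of_mul_le_mul_left (by linarith) ha
    have h2 := mul_le_mul_of_nonneg_right h1 hP0.le
    rw [one_sub_div (by positivity), div_mul_eq_mul_div, le_div_iff₀ (by positivity)]
    linear_combination h2 - S * one_div_mul_cancel hP0.ne'

section Hoffman

variable {V : Type*} [Fintype V] {k : ℕ}

/-- The spectral hypothesis: `lam i` bounds from below the normalized adjacency operator of
the link of every `i`-face, written as an inequality of quadratic forms. -/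
def HasLinkSpectralBounds (μ : (Fin k → V) → ℝ) (lam : ℕ → ℝ) : Prop :=
  ∀ (i : ℕ) (hi : i + 2 ≤ k) (σ : Fin i → V), 0 < marg μ i (by omega) σ → ∀ f : V → ℝ,
    ∑ u, ∑ v, marg μ (i + 2) hi (Fin.snoc (Fin.snoc σ u) v) * f u * f v ≥
      lam i * ∑ v, (∑ u, marg μ (i + 2) hi (Fin.snoc (Fin.snoc σ v) u)) * f v ^ 2

def IsIndependent (μ : (Fin k → V) → ℝ) (I : Finset V) : Prop :=
  ∀ τ : Fin k → V, (∀ j, τ j ∈ I) → μ τ = 0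

variable {μ : (Fin k → V) → ℝ} {lam : ℕ → ℝ}

lemma sum_marg_snoc_le_of_isIndependent (hμ : ∀ τ, 0 ≤ μ τ)
    (hsymm : ∀ (π : Equiv.Perm (Fin k)) (τ : Fin k → V), μ (τ ∘ π) = μ τ)
    (hlam : ∀ i, i + 2 ≤ k → lam i ≤ 0) (hspec : HasLinkSpectralBounds μ lam)
    {I : Finset V} (hI : IsIndependent μ I) {i : ℕ} (hi : i + 1 ≤ k) (σ : Fin i → V)
    (hσ : ∀ t, σ t ∈ I) :
    ∑ v ∈ I, marg μ (i + 1) hi (Fin.snoc σ v) ≤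
      (1 - 1 / ∏ t ∈ Ico i (k - 1), (1 - lam t)) * marg μ i (by omega) σ := by
  induction hd : k - (i + 1) generalizing i with
  | zero =>
    obtain rfl : k = i + 1 := by omega
    have h0 : ∀ v ∈ I, marg μ (i + 1) hi (Fin.snoc σ v) = 0 := fun v hv =>
      (marg_self μ _).trans (hI _ (Fin.forall_fin_succ'.2 ⟨by simpa using hσ, by simpa using hv⟩))
    simp [sum_eq_zero h0]
  | succ d ih =>
    set S := marg μ i (by omega) σ
    set a := ∑ v ∈ I, marg μ (i + 1) hi (Fin.snoc σ v)
    have hS : _ = S := sum_sum_marg_snoc_snoc μ (by omega) σ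
    have haS : a ≤ S := sum_marg_snoc_le_marg μ hμ hi σ I
    have hprod : ∏ t ∈ Ico i (k - 1), (1 - lam t) =
        (1 - lam i) * ∏ t ∈ Ico (i + 1) (k - 1), (1 - lam t) :=
      prod_eq_prod_Ico_succ_bot (by omega) _
    have hSnn : 0 ≤ S := marg_nonneg μ hμ _ σ
    rcases hSnn.eq_or_lt with hS0 | hSpos
    · have : a = 0 := le_antisymm (hS0 ▸ haS) (sum_nonneg fun _ _ => marg_nonneg μ hμ _ _)
      rw [this, ← hS0, mul_zero]
    have hlink : (1 - lam i) * a ^ 2 + lam i * a * S ≤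
        (∑ u ∈ I, ∑ v ∈ I, marg μ (i + 2) (by omega) (Fin.snoc (Fin.snoc σ u) v)) * S := by
      have := hoffman_weighted_graph (fun u v => marg_snoc_snoc_comm μ hsymm _ σ u v)
        (hspec i (by omega) σ hSpos) I (hS.symm ▸ hSpos)
      simpa only [← marg_eq_sum_marg_snoc] using this
    have hβ : ∑ u ∈ I, ∑ v ∈ I, marg μ (i + 2) (by omega) (Fin.snoc (Fin.snoc σ u) v) ≤
        (1 - 1 / ∏ t ∈ Ico (i + 1) (k - 1), (1 - lam t)) * a := by
      rw [mul_sum]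
      exact sum_le_sum fun u hu => ih (by omega) _
        (Fin.forall_fin_succ'.2 ⟨by simpa using hσ, by simpa using hu⟩) (by omega)
    rw [hprod]
    refine hoffman_bound_step (hlam i (by omega))
      (one_le_prod fun t ht => by linarith [hlam t (by simp at ht; omega)])
      (sum_nonneg fun _ _ => marg_nonneg μ hμ _ _) hSpos.le ?_
    nlinarith [mul_le_mul_of_nonneg_right hβ hSpos.le]

theorem hoffman_bound (hk : 1 ≤ k) (hμ : ∀ τ, 0 ≤ μ τ)
    (hsymm : ∀ (π : Equiv.Perm (Fin k)) (τ : Fin k → V), μ (τ ∘ π) = μ τ)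
    (hlam : ∀ i, i + 2 ≤ k → lam i ≤ 0) (hspec : HasLinkSpectralBounds μ lam)
    {I : Finset V} (hI : IsIndependent μ I) :
    ∑ v ∈ I, marg μ 1 hk (fun _ => v) ≤
      (1 - 1 / ∏ t ∈ range (k - 1), (1 - lam t)) * ∑ τ, μ τ := by
  have h := sum_marg_snoc_le_of_isIndependent hμ hsymm hlam hspec hI hk (Fin.elim0 : Fin 0 → V)
    fun t => t.elim0
  rwa [← range_eq_Ico, marg_zero] at h

lemma hasLinkSpectralBounds_tensorPow (hμ : ∀ τ, 0 ≤ μ τ)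
    (hsymm : ∀ (π : Equiv.Perm (Fin k)) (τ : Fin k → V), μ (τ ∘ π) = μ τ)
    (hlam : ∀ i, i + 2 ≤ k → lam i ≤ 0) (hspec : HasLinkSpectralBounds μ lam) (n : ℕ) :
    HasLinkSpectralBounds (tensorPow μ n) lam := by
  classical
  intro i hi σ hσ f
  let w : Fin n → Matrix V V ℝ := fun j =>
    Matrix.of fun a b => marg μ (i + 2) hi (Fin.snoc (Fin.snoc (fun t => σ t j) a) b)
  have hw : ∀ j, (w j).IsSymm := fun j =>
    Matrix.IsSymm.ext fun a b => marg_snoc_snoc_comm μ hsymm hi _ b a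
  have hfactor : ∀ j, 0 < marg μ i (by omega) (fun t => σ t j) := by
    rw [marg_tensorPow] at hσ
    exact fun j => (marg_nonneg μ hμ _ _).lt_of_ne'
      (prod_ne_zero_iff.1 hσ.ne' j (mem_univ j))
  have hcol : ∀ u v, marg (tensorPow μ n) (i + 2) hi (Fin.snoc (Fin.snoc σ u) v) =
      Matrix.piKronecker w u v := fun u v => by
    rw [marg_tensorPow, Matrix.piKronecker_apply]
    refine prod_congr rfl fun j _ => ?_
    have hsnoc : ∀ {m : ℕ} (q : Fin m → Fin n → V) (y : Fin n → V),
        (fun t => (Fin.snoc q y : Fin (m + 1) → Fin n → V) t j) = Fin.snoc (fun t => q t j) (y j) :=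
      fun q y => Fin.comp_snoc (fun x : Fin n → V => x j) q y
    rw [hsnoc, hsnoc]
    rfl
  simp only [hcol]
  refine (Matrix.posSemidef_sub_smul_degreeMatrix_iff (Matrix.isSymm_piKronecker hw) _).1
    (Matrix.posSemidef_piKronecker_sub_smul_degreeMatrix (hlam i hi) hw
      (fun j a b => marg_nonneg μ hμ hi _)
      fun j => (Matrix.posSemidef_sub_smul_degreeMatrix_iff (hw j) _).2
        (hspec i hi _ (hfactor j))) f

lemma IsIndependent.tensorPow_piFinset [DecidableEq V] {I : Finset V} (hI : IsIndependent μ I)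
    {n : ℕ} (j₀ : Fin n) :
    IsIndependent (tensorPow μ n) (Fintype.piFinset (Function.update (fun _ => univ) j₀ I)) :=
  fun τ hτ => prod_eq_zero (mem_univ j₀)
    (hI _ fun i => by simpa using Fintype.mem_piFinset.1 (hτ i) j₀)

end Hoffman

lemma sum_piFinset_update_prod {ι V : Type*} [Fintype ι] [DecidableEq ι] [Fintype V]
    [DecidableEq V] {m : V → ℝ} (hm : ∑ v, m v = 1) (j₀ : ι) (I : Finset V) :
    ∑ x ∈ Fintype.piFinset (Function.update (fun _ => univ) j₀ I), ∏ j, m (x j) =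
      ∑ v ∈ I, m v := by
  rw [← prod_univ_sum]
  simp only [Function.apply_update (fun _ s => ∑ v ∈ s, m v), prod_update_of_mem (mem_univ j₀),
    hm, prod_const_one, mul_one]

/-- **Sharpness of the high dimensional Hoffman bound is inherited by tensor powers.**
Let `μ` be a weighted `k`-uniform hypergraph on a finite vertex set `V` (nonnegative, total
sum 1, symmetric under permutations of the coordinates), whose link quadratic forms are
bounded below by `λ_i ≤ 0` (`0 ≤ i ≤ k-2`). Set `B = 1 - 1/((1-λ_0)⋯(1-λ_{k-2}))`, and
suppose some independent set `I₀ ⊆ V` has measure exactly `B`. Then for every `n ≥ 1`: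
(a) every independent set `J` of the `n`-th tensor power has measure at most `B`, and
(b) some independent set `J` of the `n`-th tensor power has measure exactly `B`.
In particular the independence number of the `n`-th tensor power equals `B`. -/
theorem high_dimensional_hoffman_bound_tensor_power_sharp
    {V : Type*} [Fintype V] (k : ℕ) (hk : 2 ≤ k)
    (μ : (Fin k → V) → ℝ)
    (hnonneg : ∀ τ : Fin k → V, 0 ≤ μ τ)
    (hsum : ∑ τ : Fin k → V, μ τ = 1)
    (hsymm : ∀ (π : Equiv.Perm (Fin k)) (τ : Fin k → V), μ (τ ∘ π) = μ τ)
    (lam : ℕ → ℝ)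
    (hlam : ∀ i : ℕ, i ≤ k - 2 → lam i ≤ 0)
    (hspec : ∀ (i : ℕ) (hi : i ≤ k - 2) (σ : Fin i → V),
      0 < marg μ i (by omega) σ →
      ∀ f : V → ℝ,
        ∑ u : V, ∑ v : V,
            marg μ (i + 2) (by omega) (Fin.snoc (Fin.snoc σ u) v) * f u * f v ≥
          lam i * ∑ v : V,
            (∑ u : V, marg μ (i + 2) (by omega) (Fin.snoc (Fin.snoc σ v) u)) * f v ^ 2)
    (I₀ : Finset V)
    (hI₀ind : ∀ τ : Fin k → V, (∀ j : Fin k, τ j ∈ I₀) → μ τ = 0)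
    (hI₀sharp : ∑ v ∈ I₀, marg μ 1 (by omega) (fun _ => v) =
      1 - 1 / ∏ i ∈ Finset.range (k - 1), (1 - lam i))
    (n : ℕ) (hn : 1 ≤ n) :
    (∀ J : Finset (Fin n → V),
      (∀ τ : Fin k → (Fin n → V), (∀ i : Fin k, τ i ∈ J) → tensorPow μ n τ = 0) →
      ∑ x ∈ J, ∏ j : Fin n, marg μ 1 (by omega) (fun _ => x j) ≤
        1 - 1 / ∏ i ∈ Finset.range (k - 1), (1 - lam i)) ∧
    (∃ J : Finset (Fin n → V),
      (∀ τ : Fin k → (Fin n → V), (∀ i : Fin k, τ i ∈ J) → tensorPow μ n τ = 0) ∧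
      ∑ x ∈ J, ∏ j : Fin n, marg μ 1 (by omega) (fun _ => x j) =
        1 - 1 / ∏ i ∈ Finset.range (k - 1), (1 - lam i)) := by
  classical
  have hlam' : ∀ i, i + 2 ≤ k → lam i ≤ 0 := fun i hi => hlam i (by omega)
  have hspec' : HasLinkSpectralBounds μ lam := fun i hi σ => hspec i (by omega) σ
  refine ⟨fun J hJ => ?_, ⟨_, IsIndependent.tensorPow_piFinset hI₀ind ⟨0, hn⟩, ?_⟩⟩
  · have h := hoffman_bound (μ := tensorPow μ n) (by omega)
      (fun τ => prod_nonneg fun j _ => hnonneg _)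
      (tensorPow_comp_perm μ n hsymm) hlam'
      (hasLinkSpectralBounds_tensorPow hnonneg hsymm hlam' hspec' n) hJ
    simpa only [marg_tensorPow, sum_tensorPow, hsum, one_pow, mul_one] using h
  · rw [sum_piFinset_update_prod ((sum_marg_one μ _).trans hsum)]
    exact hI₀sharp
end

section
/- Let A be a real symmetric m×m matrix (m ≥ 1) and B a real symmetric n×n matrix (n ≥ 1). Let a, b ∈ ℝ and suppose that every eigenvalue of A lies in the interval [a, 1] and that both a and 1 are eigenvalues of A, and likewise every eigenvalue of B lies in [b, 1] and both b and 1 are eigenvalues of B. Then the smallest eigenvalue of the Kronecker product A ⊗ B equals a·b if a ≥ 0 and b ≥ 0, and equals min(a, b) otherwise. -/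
open Kronecker

/-- `l` is a (real) eigenvalue of the square real matrix `M`: there is a nonzero vector `v`
with `M·v = l·v`. -/
def Matrix.HasRealEigenvalue {n : Type*} [Fintype n] (M : Matrix n n ℝ) (l : ℝ) : Prop :=
  ∃ v : n → ℝ, v ≠ 0 ∧ M.mulVec v = l • v

/-!
Diagonalising `A = U D U*` and `B = V E V*` by the spectral theorem gives
`A ⊗ B = (U ⊗ V) (D ⊗ E) (U ⊗ V)*` with `D ⊗ E` diagonal, so the spectrum of `A ⊗ B` is the set
of products `λ μ` of eigenvalues of `A` and of `B`. As `(x, y) ↦ x y` is bilinear, its minimum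
over `[a, 1] × [b, 1]` is attained at a corner, i.e. it is `min {a b, a, b, 1}`.
-/

open Matrix Pointwise Set

theorem Matrix.hasRealEigenvalue_iff_mem_spectrum {n : Type*} [Fintype n] [DecidableEq n]
    {M : Matrix n n ℝ} {l : ℝ} : M.HasRealEigenvalue l ↔ l ∈ spectrum ℝ M := by
  rw [← spectrum_toLin', ← Module.End.hasEigenvalue_iff_mem_spectrum,
    Module.End.hasEigenvalue_iff, Submodule.ne_bot_iff]
  simp only [Module.End.mem_eigenspace_iff, toLin'_apply]
  exact exists_congr fun v => and_comm

theorem Matrix.spectrum_real_diagonal_ofReal {𝕜 n : Type*} [RCLike 𝕜] [Fintype n]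
    [DecidableEq n] (d : n → ℝ) : spectrum ℝ (diagonal (RCLike.ofReal ∘ d : n → 𝕜)) = range d := by
  ext x
  rw [← spectrum.algebraMap_mem_iff 𝕜, spectrum_diagonal]
  simp [RCLike.algebraMap_eq_ofReal]

theorem Matrix.IsHermitian.spectrum_kronecker {𝕜 m n : Type*} [RCLike 𝕜] [Fintype m] [Fintype n]
    [DecidableEq m] [DecidableEq n] {A : Matrix m m 𝕜} {B : Matrix n n 𝕜}
    (hA : A.IsHermitian) (hB : B.IsHermitian) :
    spectrum ℝ (A ⊗ₖ B) = spectrum ℝ A * spectrum ℝ B := by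
  let U : unitary (Matrix (m × n) (m × n) 𝕜) :=
    ⟨_, kronecker_mem_unitary hA.eigenvectorUnitary.2 hB.eigenvectorUnitary.2⟩
  have hdiag : A ⊗ₖ B = Unitary.conjStarAlgAut ℝ _ U
      (diagonal (RCLike.ofReal ∘ fun p => hA.eigenvalues p.1 * hB.eigenvalues p.2)) := by
    conv_lhs => rw [hA.spectral_theorem, hB.spectral_theorem]
    simp [U, mul_kronecker_mul, diagonal_kronecker_diagonal, star_eq_conjTranspose,
      conjTranspose_kronecker, Function.comp_def]
  rw [hdiag, AlgEquiv.spectrum_eq, spectrum_real_diagonal_ofReal,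
    hA.spectrum_real_eq_range_eigenvalues, hB.spectrum_real_eq_range_eigenvalues, ← image2_mul,
    image2_range]

theorem min_le_mul_of_mem_Icc_of_nonpos {a b x y : ℝ} (ha : a ≤ 0) (hx : x ∈ Icc a 1)
    (hy : y ∈ Icc b 1) : min a b ≤ x * y := by
  rcases le_total 0 y with hy0 | hy0
  · calc min a b ≤ a := min_le_left a b
      _ ≤ a * y := by nlinarith [hy.2]
      _ ≤ x * y := mul_le_mul_of_nonneg_right hx.1 hy0
  · calc min a b ≤ y := (min_le_right a b).trans hy.1
      _ = 1 * y := (one_mul y).symm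
      _ ≤ x * y := mul_le_mul_of_nonpos_right hx.2 hy0

theorem ite_le_mul_of_mem_Icc {a b x y : ℝ} (hx : x ∈ Icc a 1) (hy : y ∈ Icc b 1) :
    (if 0 ≤ a ∧ 0 ≤ b then a * b else min a b) ≤ x * y := by
  split_ifs with h
  · exact mul_le_mul hx.1 hy.1 h.2 (h.1.trans hx.1)
  · rcases not_and_or.mp h with ha | hb
    · exact min_le_mul_of_mem_Icc_of_nonpos (not_le.mp ha).le hx hy
    · rw [min_comm, mul_comm]
      exact min_le_mul_of_mem_Icc_of_nonpos (not_le.mp hb).le hy hx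

theorem kronecker_min_eigenvalue_general
    {m n : ℕ}
    (A : Matrix (Fin m) (Fin m) ℝ) (B : Matrix (Fin n) (Fin n) ℝ)
    (hAsymm : A.IsSymm) (hBsymm : B.IsSymm) (a b : ℝ)
    (hAbound : ∀ l : ℝ, A.HasRealEigenvalue l → a ≤ l ∧ l ≤ 1)
    (hAa : A.HasRealEigenvalue a) (hA1 : A.HasRealEigenvalue 1)
    (hBbound : ∀ l : ℝ, B.HasRealEigenvalue l → b ≤ l ∧ l ≤ 1)
    (hBb : B.HasRealEigenvalue b) (hB1 : B.HasRealEigenvalue 1) :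
    (A ⊗ₖ B).HasRealEigenvalue (if 0 ≤ a ∧ 0 ≤ b then a * b else min a b) ∧
      ∀ l : ℝ, (A ⊗ₖ B).HasRealEigenvalue l →
        (if 0 ≤ a ∧ 0 ≤ b then a * b else min a b) ≤ l := by
  simp only [hasRealEigenvalue_iff_mem_spectrum] at hAbound hAa hA1 hBbound hBb hB1 ⊢
  rw [(isHermitian_iff_isSymm.mpr hAsymm).spectrum_kronecker (isHermitian_iff_isSymm.mpr hBsymm)]
  refine ⟨?_, ?_⟩
  · split_ifs
    · exact mul_mem_mul hAa hBb
    · rcases min_choice a b with h | h <;> rw [h]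
      · simpa using mul_mem_mul hAa hB1
      · simpa using mul_mem_mul hA1 hBb
  · rintro _ ⟨x, hx, y, hy, rfl⟩
    exact ite_le_mul_of_mem_Icc (hAbound x hx) (hBbound y hy)

/-- **Minimal eigenvalue of a Kronecker product.** Let `A`, `B` be real symmetric matrices
whose eigenvalues lie in `[a, 1]` resp. `[b, 1]`, with `a`, `1` eigenvalues of `A` and
`b`, `1` eigenvalues of `B`. Then the smallest eigenvalue of `A ⊗ B` equals `a·b` if
`a ≥ 0` and `b ≥ 0`, and equals `min a b` otherwise. -/
theorem kronecker_min_eigenvalue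
    {m n : ℕ} (hm : 1 ≤ m) (hn : 1 ≤ n)
    (A : Matrix (Fin m) (Fin m) ℝ) (B : Matrix (Fin n) (Fin n) ℝ)
    (hAsymm : A.IsSymm) (hBsymm : B.IsSymm) (a b : ℝ)
    (hAbound : ∀ l : ℝ, A.HasRealEigenvalue l → a ≤ l ∧ l ≤ 1)
    (hAa : A.HasRealEigenvalue a) (hA1 : A.HasRealEigenvalue 1)
    (hBbound : ∀ l : ℝ, B.HasRealEigenvalue l → b ≤ l ∧ l ≤ 1)
    (hBb : B.HasRealEigenvalue b) (hB1 : B.HasRealEigenvalue 1) :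
    (A ⊗ₖ B).HasRealEigenvalue (if 0 ≤ a ∧ 0 ≤ b then a * b else min a b) ∧
      ∀ l : ℝ, (A ⊗ₖ B).HasRealEigenvalue l →
        (if 0 ≤ a ∧ 0 ≤ b then a * b else min a b) ≤ l :=
  kronecker_min_eigenvalue_general A B hAsymm hBsymm a b hAbound hAa hA1 hBbound hBb hB1
end

section
/- Let k ≥ 2 be an integer, n ≥ 1, and let p be a real number with 0 ≤ p ≤ 1 - 1/k. Let F be a family of subsets of {1,…,n} that is k-wise intersecting: for all F₁, …, F_k ∈ F (not necessarily distinct), F₁ ∩ F₂ ∩ ⋯ ∩ F_k ≠ ∅. Then μ_p(F) = Σ_{A∈F} p^{|A|}(1-p)^{n-|A|} ≤ p. -/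
/-!
Replace `F` by its up-closure `M`, which is still `k`-wise intersecting. At `q = 1 - 1/k`, colour
the ground set uniformly at random with `k` colours: the complement of each colour class is a
`q`-biased random set, and the `k` complements coming from one colouring never all lie in `M`, so
`k μ_q(M) ≤ k - 1`. For `p ≤ q`, the Russo–Margulis formula and the Efron–Stein inequality for the
monotone family `M` give `μ (1 - μ) ≤ p (1 - p) dμ/dp`, which says that the log-odds of `μ_p(M)`
minus those of `p` increase with `p`. They are `≤ 0` at `q`, hence at every `p ≤ q`.
-/

open Finset

noncomputable def logOdds (x : ℝ) : ℝ := Real.log x - Real.log (1 - x)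

lemma strictMonoOn_logOdds : StrictMonoOn logOdds (Set.Ioo 0 1) := by
  intro x ⟨hx0, hx1⟩ y ⟨hy0, hy1⟩ hxy
  have h₁ : Real.log x < Real.log y := Real.log_lt_log hx0 hxy
  have h₂ : Real.log (1 - y) < Real.log (1 - x) := Real.log_lt_log (by linarith) (by linarith)
  unfold logOdds
  linarith

lemma hasDerivAt_logOdds {x : ℝ} (hx : x ∈ Set.Ioo 0 1) :
    HasDerivAt logOdds (1 / (x * (1 - x))) x := by
  obtain ⟨hx0, hx1⟩ := hx
  have h1x : 1 - x ≠ 0 := sub_ne_zero.2 hx1.ne'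
  have h : HasDerivAt (fun y => Real.log y - Real.log (1 - y)) (x⁻¹ - -1 / (1 - x)) x :=
    (Real.hasDerivAt_log hx0.ne').sub (((hasDerivAt_id x).const_sub 1).log h1x)
  exact h.congr_deriv (by field_simp; ring)

/-- The hypothesis `hf'` says that `logOdds ∘ f - logOdds` is nondecreasing on `(0,1)`. -/
theorem le_self_of_mul_one_sub_le_mul_deriv {f : ℝ → ℝ} (hf : Differentiable ℝ f)
    (hf01 : ∀ x ∈ Set.Ioo (0 : ℝ) 1, f x ∈ Set.Ioo (0 : ℝ) 1)
    (hf' : ∀ x ∈ Set.Ioo (0 : ℝ) 1, f x * (1 - f x) ≤ x * (1 - x) * deriv f x)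
    {p q : ℝ} (hp : 0 < p) (hpq : p ≤ q) (hq : q < 1) (hfq : f q ≤ q) : f p ≤ p := by
  set g : ℝ → ℝ := fun x => logOdds (f x) - logOdds x
  have hg : ∀ x ∈ Set.Ioo (0 : ℝ) 1,
      HasDerivAt g (1 / (f x * (1 - f x)) * deriv f x - 1 / (x * (1 - x))) x := fun x hx =>
    ((hasDerivAt_logOdds (hf01 x hx)).comp x (hf x).hasDerivAt).sub (hasDerivAt_logOdds hx)
  have hmono : MonotoneOn g (Set.Ioo 0 1) := by
    refine monotoneOn_of_hasDerivWithinAt_nonneg (convex_Ioo 0 1)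
      (fun x hx => (hg x hx).continuousAt.continuousWithinAt)
      (fun x hx => (hg x (interior_subset hx)).hasDerivWithinAt) fun x hx => ?_
    rw [interior_Ioo] at hx
    obtain ⟨hfx0, hfx1⟩ := hf01 x hx
    rw [sub_nonneg, ← mul_div_right_comm, one_mul,
      div_le_div_iff₀ (mul_pos hx.1 (sub_pos.2 hx.2)) (mul_pos hfx0 (sub_pos.2 hfx1))]
    linarith [hf' x hx]
  have hp1 : p ∈ Set.Ioo (0 : ℝ) 1 := ⟨hp, hpq.trans_lt hq⟩
  have hq1 : q ∈ Set.Ioo (0 : ℝ) 1 := ⟨hp.trans_le hpq, hq⟩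
  have hgq : g q ≤ 0 :=
    sub_nonpos.2 (strictMonoOn_logOdds.monotoneOn (hf01 q hq1) hq1 hfq)
  exact (strictMonoOn_logOdds.le_iff_le (hf01 p hp1) hp1).1
    (sub_nonpos.1 ((hmono hp1 hq1 hpq).trans hgq))

section BiasedMeasure

variable {α : Type*} {s : Finset α} {𝒜 ℬ : Finset (Finset α)} {a : α} {p : ℝ}

/-- `μ_p(𝒜)` on the cube of subsets of `s`; meant for `𝒜 ⊆ s.powerset`, as `#s - #t` truncates. -/
noncomputable def biasedMeasure (s : Finset α) (p : ℝ) (𝒜 : Finset (Finset α)) : ℝ :=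
  ∑ t ∈ 𝒜, p ^ #t * (1 - p) ^ (#s - #t)

def IsUpperFamily (s : Finset α) (𝒜 : Finset (Finset α)) : Prop :=
  𝒜 ⊆ s.powerset ∧ ∀ t ∈ 𝒜, ∀ u ⊆ s, t ⊆ u → u ∈ 𝒜

lemma pow_mul_one_sub_pow_nonneg (hp0 : 0 ≤ p) (hp1 : p ≤ 1) (i j : ℕ) :
    0 ≤ p ^ i * (1 - p) ^ j :=
  mul_nonneg (pow_nonneg hp0 _) (pow_nonneg (sub_nonneg.2 hp1) _)

lemma biasedMeasure_mono (h : 𝒜 ⊆ ℬ) (hp0 : 0 ≤ p) (hp1 : p ≤ 1) :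
    biasedMeasure s p 𝒜 ≤ biasedMeasure s p ℬ :=
  sum_le_sum_of_subset_of_nonneg h fun _ _ _ => pow_mul_one_sub_pow_nonneg hp0 hp1 _ _

lemma biasedMeasure_powerset (s : Finset α) (p : ℝ) : biasedMeasure s p s.powerset = 1 := by
  rw [biasedMeasure, sum_pow_mul_eq_add_pow, add_sub_cancel, one_pow]

lemma biasedMeasure_le_one (h𝒜 : 𝒜 ⊆ s.powerset) (hp0 : 0 ≤ p) (hp1 : p ≤ 1) :
    biasedMeasure s p 𝒜 ≤ 1 :=
  (biasedMeasure_mono h𝒜 hp0 hp1).trans_eq (biasedMeasure_powerset s p)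

lemma biasedMeasure_zero (h : ∅ ∉ 𝒜) : biasedMeasure s 0 𝒜 = 0 :=
  sum_eq_zero fun t ht => by
    rw [zero_pow (card_ne_zero.2 (nonempty_iff_ne_empty.2 (ne_of_mem_of_not_mem ht h))), zero_mul]

lemma biasedMeasure_pos (hs : s ∈ 𝒜) (hp0 : 0 < p) (hp1 : p ≤ 1) : 0 < biasedMeasure s p 𝒜 := by
  refine lt_of_lt_of_le ?_ (single_le_sum (fun _ _ => pow_mul_one_sub_pow_nonneg hp0.le hp1 _ _) hs)
  rw [Nat.sub_self, pow_zero, mul_one]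
  exact pow_pos hp0 _

lemma differentiable_biasedMeasure (s : Finset α) (𝒜 : Finset (Finset α)) :
    Differentiable ℝ fun p => biasedMeasure s p 𝒜 := by
  unfold biasedMeasure
  fun_prop

variable [DecidableEq α]

lemma biasedMeasure_lt_one (h𝒜 : 𝒜 ⊆ s.powerset) (h : ∅ ∉ 𝒜) (hp0 : 0 ≤ p) (hp1 : p < 1) :
    biasedMeasure s p 𝒜 < 1 := by
  have hle := biasedMeasure_le_one (insert_subset (empty_mem_powerset s) h𝒜) hp0 hp1.le
  rw [biasedMeasure, sum_insert h, card_empty, pow_zero, one_mul, Nat.sub_zero] at hle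
  have : 0 < (1 - p) ^ #s := pow_pos (sub_pos.2 hp1) _
  exact lt_of_lt_of_le (lt_add_of_pos_left _ this) hle

lemma biasedMeasure_insert (ha : a ∉ s) (h𝒜 : 𝒜 ⊆ (insert a s).powerset) (p : ℝ) :
    biasedMeasure (insert a s) p 𝒜 = (1 - p) * biasedMeasure s p (𝒜.nonMemberSubfamily a)
      + p * biasedMeasure s p (𝒜.memberSubfamily a) := by
  rw [biasedMeasure, ← sum_filter_not_add_sum_filter 𝒜 (a ∈ ·), ← image_insert_memberSubfamily,
    sum_image, biasedMeasure, biasedMeasure, mul_sum, mul_sum, card_insert_of_notMem ha]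
  · congr 1
    · refine sum_congr rfl fun t ht => ?_
      obtain ⟨htA, hat⟩ := mem_filter.1 ht
      have hts : #t ≤ #s := card_le_card
        ((subset_insert_iff_of_notMem hat).1 (mem_powerset.1 (h𝒜 htA)))
      rw [Nat.sub_add_comm hts, pow_succ]
      ring
    · refine sum_congr rfl fun t ht => ?_
      have hat := (mem_memberSubfamily.1 ht).2
      rw [card_insert_of_notMem hat, Nat.add_sub_add_right, pow_succ]
      ring
  · intro t ht u hu htu
    rw [← erase_insert (mem_memberSubfamily.1 ht).2, ← erase_insert (mem_memberSubfamily.1 hu).2]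
    exact congrArg (erase · a) htu

lemma IsUpperFamily.nonMemberSubfamily (h : IsUpperFamily (insert a s) 𝒜) (ha : a ∉ s) :
    IsUpperFamily s (𝒜.nonMemberSubfamily a) := by
  refine ⟨fun t ht => ?_, fun t ht u hus htu => ?_⟩
  · rw [mem_nonMemberSubfamily] at ht
    exact mem_powerset.2 ((subset_insert_iff_of_notMem ht.2).1 (mem_powerset.1 (h.1 ht.1)))
  · rw [mem_nonMemberSubfamily] at ht ⊢
    exact ⟨h.2 t ht.1 u (hus.trans (subset_insert a s)) htu, fun hau => ha (hus hau)⟩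

lemma IsUpperFamily.memberSubfamily (h : IsUpperFamily (insert a s) 𝒜) (ha : a ∉ s) :
    IsUpperFamily s (𝒜.memberSubfamily a) := by
  refine ⟨fun t ht => ?_, fun t ht u hus htu => ?_⟩
  · rw [mem_memberSubfamily] at ht
    exact mem_powerset.2 ((insert_subset_insert_iff ht.2).1 (mem_powerset.1 (h.1 ht.1)))
  · rw [mem_memberSubfamily] at ht ⊢
    exact ⟨h.2 _ ht.1 _ (insert_subset_insert a hus) (insert_subset_insert a htu),
      fun hau => ha (hus hau)⟩

lemma IsUpperFamily.nonMemberSubfamily_subset_memberSubfamily (h : IsUpperFamily s 𝒜)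
    (ha : a ∈ s) : 𝒜.nonMemberSubfamily a ⊆ 𝒜.memberSubfamily a := fun t ht => by
  rw [mem_nonMemberSubfamily] at ht
  rw [mem_memberSubfamily]
  exact ⟨h.2 t ht.1 _ (insert_subset ha (mem_powerset.1 (h.1 ht.1))) (subset_insert a t), ht.2⟩

/-- The Russo–Margulis formula combined with the Efron–Stein inequality. -/
theorem IsUpperFamily.biasedMeasure_mul_one_sub_le (h𝒜 : IsUpperFamily s 𝒜)
    (hp0 : 0 ≤ p) (hp1 : p ≤ 1) :
    biasedMeasure s p 𝒜 * (1 - biasedMeasure s p 𝒜)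
      ≤ p * (1 - p) * deriv (fun q => biasedMeasure s q 𝒜) p := by
  induction s using Finset.induction generalizing 𝒜 with
  | empty =>
    rcases subset_singleton_iff.1 (powerset_empty (α := α) ▸ h𝒜.1) with rfl | rfl <;>
      simp [biasedMeasure]
  | insert a s ha ih =>
    set f₀ := fun q => biasedMeasure s q (𝒜.nonMemberSubfamily a)
    set f₁ := fun q => biasedMeasure s q (𝒜.memberSubfamily a)
    have hd₀ := (differentiable_biasedMeasure s (𝒜.nonMemberSubfamily a) p).hasDerivAt
    have hd₁ := (differentiable_biasedMeasure s (𝒜.memberSubfamily a) p).hasDerivAt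
    have hsplit : (fun q => biasedMeasure (insert a s) q 𝒜) = fun q => (1 - q) * f₀ q + q * f₁ q :=
      funext (biasedMeasure_insert ha h𝒜.1)
    have hderiv : deriv (fun q => biasedMeasure (insert a s) q 𝒜) p
        = f₁ p - f₀ p + (1 - p) * deriv f₀ p + p * deriv f₁ p := by
      rw [hsplit]
      refine ((((hasDerivAt_id p).const_sub 1).mul hd₀).add
        ((hasDerivAt_id p).mul hd₁)).deriv.trans ?_
      simp only [id]
      ring
    have ih₀ := ih (h𝒜.nonMemberSubfamily ha)
    have ih₁ := ih (h𝒜.memberSubfamily ha)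
    have h₀₁ : f₀ p ≤ f₁ p := biasedMeasure_mono
      (h𝒜.nonMemberSubfamily_subset_memberSubfamily (mem_insert_self a s)) hp0 hp1
    have h₀ : 0 ≤ f₀ p := sum_nonneg fun _ _ => pow_mul_one_sub_pow_nonneg hp0 hp1 _ _
    have h₁ : f₁ p ≤ 1 := biasedMeasure_le_one (h𝒜.memberSubfamily ha).1 hp0 hp1
    rw [hderiv, biasedMeasure_insert ha h𝒜.1]
    -- `μ (1 - μ) = (1-p) a (1-a) + p b (1-b) + p (1-p) (b-a)²` with `a = f₀ p ≤ b = f₁ p ≤ 1`,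
    -- and `(b-a)² ≤ b-a`
    nlinarith [mul_le_mul_of_nonneg_left ih₀ (sub_nonneg.2 hp1), mul_le_mul_of_nonneg_left ih₁ hp0,
      mul_nonneg (mul_nonneg hp0 (sub_nonneg.2 hp1))
        (mul_nonneg (sub_nonneg.2 h₀₁) (by linarith : 0 ≤ 1 - (f₁ p - f₀ p)))]

theorem IsUpperFamily.biasedMeasure_le_self_of_le {q : ℝ} (h𝒜 : IsUpperFamily s 𝒜)
    (hempty : ∅ ∉ 𝒜) (hp0 : 0 ≤ p) (hpq : p ≤ q) (hq : q < 1) (hμq : biasedMeasure s q 𝒜 ≤ q) :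
    biasedMeasure s p 𝒜 ≤ p := by
  obtain rfl | ⟨t, ht⟩ := 𝒜.eq_empty_or_nonempty
  · simpa [biasedMeasure] using hp0
  obtain rfl | hp := hp0.eq_or_lt
  · rw [biasedMeasure_zero hempty]
  have hs : s ∈ 𝒜 := h𝒜.2 t ht s Subset.rfl (mem_powerset.1 (h𝒜.1 ht))
  exact le_self_of_mul_one_sub_le_mul_deriv (differentiable_biasedMeasure s 𝒜)
    (fun x hx => ⟨biasedMeasure_pos hs hx.1 hx.2.le, biasedMeasure_lt_one h𝒜.1 hempty hx.1.le hx.2⟩)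
    (fun x hx => h𝒜.biasedMeasure_mul_one_sub_le hx.1.le hx.2.le) hp hpq hq hμq

end BiasedMeasure

section KWiseIntersecting

variable {α : Type*} {𝒜 : Finset (Finset α)} {k : ℕ}

def IsKWiseIntersecting (k : ℕ) (𝒜 : Finset (Finset α)) : Prop :=
  ∀ G : Fin k → Finset α, (∀ i, G i ∈ 𝒜) → ∃ x, ∀ i, x ∈ G i

lemma IsKWiseIntersecting.empty_notMem (h : IsKWiseIntersecting k 𝒜) (hk : 0 < k) : ∅ ∉ 𝒜 :=
  fun hempty => by
    obtain ⟨x, hx⟩ := h (fun _ => ∅) fun _ => hempty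
    exact notMem_empty x (hx ⟨0, hk⟩)

variable [Fintype α] [DecidableEq α]

def upClosure (𝒜 : Finset (Finset α)) : Finset (Finset α) := {u | ∃ t ∈ 𝒜, t ⊆ u}

lemma subset_upClosure : 𝒜 ⊆ upClosure 𝒜 :=
  fun t ht => mem_filter.2 ⟨mem_univ t, t, ht, Subset.rfl⟩

lemma isUpperFamily_upClosure : IsUpperFamily univ (upClosure 𝒜) :=
  ⟨fun u _ => mem_powerset.2 (subset_univ u), fun t ht u _ htu => by
    obtain ⟨-, t', ht', ht't⟩ := mem_filter.1 ht
    exact mem_filter.2 ⟨mem_univ u, t', ht', ht't.trans htu⟩⟩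

lemma IsKWiseIntersecting.upClosure (h : IsKWiseIntersecting k 𝒜) :
    IsKWiseIntersecting k (upClosure 𝒜) := fun G hG => by
  choose H hH hHG using fun i => (mem_filter.1 (hG i)).2
  obtain ⟨x, hx⟩ := h H hH
  exact ⟨x, fun i => hHG i (hx i)⟩

lemma card_filter_ne_eq {β : Type*} [Fintype β] [DecidableEq β] (j : β) (A : Finset α) :
    #{c : α → β | ({x | c x ≠ j} : Finset α) = A} = (Fintype.card β - 1) ^ #A := by
  have : ({c : α → β | ({x | c x ≠ j} : Finset α) = A} : Finset (α → β))
      = Fintype.piFinset fun x => if x ∈ A then {j}ᶜ else {j} := by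
    ext c
    simp only [mem_filter, mem_univ, true_and, Fintype.mem_piFinset, Finset.ext_iff]
    refine forall_congr' fun x => ?_
    split_ifs with hx <;> simp [hx]
  rw [this, Fintype.card_piFinset]
  simp [apply_ite card, card_compl]

lemma IsKWiseIntersecting.card_mul_sum_le (h : IsKWiseIntersecting k 𝒜) :
    k * ∑ A ∈ 𝒜, (k - 1) ^ #A ≤ (k - 1) * k ^ Fintype.card α := by
  -- double count colourings `c : α → Fin k` and colours `j` with `{x | c x ≠ j} ∈ 𝒜`
  calc k * ∑ A ∈ 𝒜, (k - 1) ^ #A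
      = ∑ j : Fin k, #{c : α → Fin k | ({x | c x ≠ j} : Finset α) ∈ 𝒜} := by
        simp only [← sum_card_fiberwise_eq_card_filter, card_filter_ne_eq, Fintype.card_fin,
          sum_const, card_univ, smul_eq_mul]
    _ = ∑ c : α → Fin k, #{j : Fin k | ({x | c x ≠ j} : Finset α) ∈ 𝒜} := by
        simp only [card_filter]
        exact sum_comm
    _ ≤ ∑ _c : α → Fin k, (k - 1) := sum_le_sum fun c _ => ?_
    _ = (k - 1) * k ^ Fintype.card α := by simp [mul_comm]
  refine Nat.le_sub_one_of_lt ((card_lt_card (ssubset_univ_iff.2 fun hall => ?_)).trans_eq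
    (card_fin k))
  obtain ⟨x, hx⟩ := h (fun j => ({x | c x ≠ j} : Finset α))
    fun j => (mem_filter.1 (hall.ge (mem_univ j))).2
  simpa using hx (c x)

lemma IsKWiseIntersecting.biasedMeasure_le (h : IsKWiseIntersecting k 𝒜) (hk : 0 < k) :
    biasedMeasure univ (1 - 1 / k) 𝒜 ≤ 1 - 1 / k := by
  have hk' : (0 : ℝ) < k := Nat.cast_pos.2 hk
  have hcount : (k : ℝ) * ∑ A ∈ 𝒜, ((k : ℝ) - 1) ^ #A ≤ ((k : ℝ) - 1) * k ^ Fintype.card α := by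
    have := (Nat.cast_le (α := ℝ)).2 h.card_mul_sum_le
    push_cast [Nat.cast_pred hk] at this
    exact this
  have hterm : ∀ A : Finset α,
      (1 - 1 / (k : ℝ)) ^ #A * (1 - (1 - 1 / k)) ^ (#(univ : Finset α) - #A)
        = ((k : ℝ) - 1) ^ #A / k ^ Fintype.card α := fun A => by
    rw [card_univ, ← Nat.add_sub_cancel' (card_le_univ A), pow_add, Nat.add_sub_cancel_left,
      sub_sub_cancel, one_sub_div hk'.ne', div_pow, one_div_pow]
    field_simp
  rw [biasedMeasure, sum_congr rfl fun A _ => hterm A, ← sum_div, div_le_iff₀ (by positivity)]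
  field_simp
  linarith

end KWiseIntersecting

theorem frankl_tokushige_k_wise_intersecting_general (k n : ℕ) (hk : 2 ≤ k)
    (p : ℝ) (hp0 : 0 ≤ p) (hp1 : p ≤ 1 - 1 / (k : ℝ))
    (F : Finset (Finset (Fin n)))
    (hint : ∀ G : Fin k → Finset (Fin n), (∀ i : Fin k, G i ∈ F) →
      ∃ x : Fin n, ∀ i : Fin k, x ∈ G i) :
    ∑ A ∈ F, p ^ A.card * (1 - p) ^ (n - A.card) ≤ p := by
  have hk0 : 0 < k := by omega
  have hM : IsKWiseIntersecting k (upClosure F) := IsKWiseIntersecting.upClosure hint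
  have hq : 1 - 1 / (k : ℝ) < 1 := sub_lt_self 1 (by positivity)
  calc ∑ A ∈ F, p ^ A.card * (1 - p) ^ (n - A.card) = biasedMeasure univ p F := by
        simp [biasedMeasure]
    _ ≤ biasedMeasure univ p (upClosure F) :=
        biasedMeasure_mono subset_upClosure hp0 (hp1.trans hq.le)
    _ ≤ p := isUpperFamily_upClosure.biasedMeasure_le_self_of_le (hM.empty_notMem hk0) hp0 hp1 hq
        (hM.biasedMeasure_le hk0)

/-- **Frankl–Tokushige theorem on `k`-wise intersecting families.** Let `k ≥ 2` and
`0 ≤ p ≤ 1 - 1/k`. If `F` is a family of subsets of an `n`-element ground set such that any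
`k` members of `F` (repetitions allowed) have a common element, then the `p`-biased measure
`μ_p(F) = ∑_{A ∈ F} p^{|A|}(1-p)^{n-|A|}` is at most `p`. -/
theorem frankl_tokushige_k_wise_intersecting (k n : ℕ) (hk : 2 ≤ k) (hn : 1 ≤ n)
    (p : ℝ) (hp0 : 0 ≤ p) (hp1 : p ≤ 1 - 1 / (k : ℝ))
    (F : Finset (Finset (Fin n)))
    (hint : ∀ G : Fin k → Finset (Fin n), (∀ i : Fin k, G i ∈ F) →
      ∃ x : Fin n, ∀ i : Fin k, x ∈ G i) :
    ∑ A ∈ F, p ^ A.card * (1 - p) ^ (n - A.card) ≤ p :=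
  frankl_tokushige_k_wise_intersecting_general k n hk p hp0 hp1 F hint
end

section
/- Let k ≥ 1 and let A, B, C be subsets of {1,…,n}, each of size 2k, such that every element of {1,…,n} lies in an even number (0 or 2) of the sets A, B, C (that is, the triple symmetric difference A Δ B Δ C is empty). Then A, B, C are pairwise distinct, A ∩ B ∩ C = ∅, the pairwise intersections D = A ∩ B, E = A ∩ C, F = B ∩ C are pairwise disjoint sets each of size exactly k, and A = D ∪ E, B = D ∪ F, C = E ∪ F; in particular C = A Δ B. -/
/-- **Structure of extended triangles of `2k`-sets.** If `A, B, C` are `2k`-element subsets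
of an `n`-element ground set whose triple symmetric difference `A ∆ B ∆ C` is empty (every
point lies in an even number of the three sets), then `A, B, C` are pairwise distinct,
`A ∩ B ∩ C = ∅`, the pairwise intersections `D = A ∩ B`, `E = A ∩ C`, `F = B ∩ C` are
pairwise disjoint of size exactly `k`, `A = D ∪ E`, `B = D ∪ F`, `C = E ∪ F`, and in
particular `C = A ∆ B`. -/
theorem triangle_structure (n k : ℕ) (hk : 1 ≤ k)
    (A B C : Finset (Fin n))
    (hA : A.card = 2 * k) (hB : B.card = 2 * k) (hC : C.card = 2 * k)
    (htri : symmDiff (symmDiff A B) C = ∅) :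
    (A ≠ B ∧ A ≠ C ∧ B ≠ C) ∧
    A ∩ B ∩ C = ∅ ∧
    (Disjoint (A ∩ B) (A ∩ C) ∧ Disjoint (A ∩ B) (B ∩ C) ∧ Disjoint (A ∩ C) (B ∩ C)) ∧
    ((A ∩ B).card = k ∧ (A ∩ C).card = k ∧ (B ∩ C).card = k) ∧
    (A = (A ∩ B) ∪ (A ∩ C) ∧ B = (A ∩ B) ∪ (B ∩ C) ∧ C = (A ∩ C) ∪ (B ∩ C)) ∧
    C = symmDiff A B := by
  have hCeq : C = symmDiff A B := (Finset.symmDiff_eq_empty.mp htri).symm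
  -- membership characterization of C
  have hmemC : ∀ x, x ∈ C ↔ ((x ∈ A ∧ x ∉ B) ∨ (x ∈ B ∧ x ∉ A)) := by
    intro x; rw [hCeq]; exact Finset.mem_symmDiff
  -- cardinality facts
  have h1 : (A \ B).card + (A ∩ B).card = A.card := Finset.card_sdiff_add_card_inter A B
  have h2 : (B \ A).card + (B ∩ A).card = B.card := Finset.card_sdiff_add_card_inter B A
  have hBA : (B ∩ A).card = (A ∩ B).card := by rw [Finset.inter_comm]
  have hCcard : C.card = (A \ B).card + (B \ A).card := by
    rw [hCeq, symmDiff_def, Finset.sup_eq_union,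
      Finset.card_union_of_disjoint (disjoint_sdiff_sdiff)]
  have hABk : (A ∩ B).card = k := by omega
  -- set identities
  have hAC : A ∩ C = A \ B := by
    ext x; simp only [Finset.mem_inter, Finset.mem_sdiff, hmemC x]; tauto
  have hBC : B ∩ C = B \ A := by
    ext x; simp only [Finset.mem_inter, Finset.mem_sdiff, hmemC x]; tauto
  have hACk : (A ∩ C).card = k := by rw [hAC]; omega
  have hBCk : (B ∩ C).card = k := by rw [hBC]; omega
  refine ⟨⟨?_, ?_, ?_⟩, ?_, ⟨?_, ?_, ?_⟩, ⟨hABk, hACk, hBCk⟩, ⟨?_, ?_, ?_⟩, hCeq⟩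
  · intro h
    rw [h, symmDiff_self] at hCeq
    rw [hCeq] at hC
    simp at hC
    omega
  · intro h; rw [← h] at hACk; rw [Finset.inter_self] at hACk; omega
  · intro h; rw [← h] at hBCk; rw [Finset.inter_self] at hBCk; omega
  · ext x; simp only [Finset.mem_inter, Finset.notMem_empty, iff_false, hmemC x]; tauto
  · rw [Finset.disjoint_left]; intro x hx hx'
    rw [hAC, Finset.mem_sdiff] at hx'; exact hx'.2 (Finset.mem_inter.mp hx).2
  · rw [Finset.disjoint_left]; intro x hx hx'
    rw [hBC, Finset.mem_sdiff] at hx'; exact hx'.2 (Finset.mem_inter.mp hx).1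
  · rw [hAC, hBC, Finset.disjoint_left]; intro x hx hx'
    exact (Finset.mem_sdiff.mp hx').2 (Finset.mem_sdiff.mp hx).1
  · ext x; simp only [Finset.mem_union, Finset.mem_inter, hmemC x]; tauto
  · ext x; simp only [Finset.mem_union, Finset.mem_inter, hmemC x]; tauto
  · ext x; simp only [Finset.mem_union, Finset.mem_inter, hmemC x]; tauto
end
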